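/- Let n ≥ 1, let R : ℝ → Matrix (Fin n) (Fin n) ℝ be continuous with R(t) symmetric for every t, and let T > 0. Let U be a Lagrangian Jacobi solution along R with U(0) = 1 such that U(u) is invertible for every u ∈ [0, T], let A be the Jacobi solution along R with A(0) = 0 and A'(0) = 1, and for t ∈ (0, T] let S_t be the Jacobi solution along R with S_t(0) = 1 and S_t(t) = 0. Then for every t ∈ (0, T], det A(t) * det (U'(0) − S_t'(0)) = det U(t). -/

import Mathlib

/-!
The Wronskian `W(X, Y) = X'ᵀ Y - Xᵀ Y'` of two Jacobi solutions is constant, because `R` is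
symmetric. Comparing `W(S_t, A)` and `W(S_t, U)` at `0` and at `t` gives `S_t'(t)ᵀ A(t) = -1`
and `S_t'(t)ᵀ U(t) = -(U'(0) - S_t'(0))ᵀ`, the latter since `U'(0)` is symmetric for the
Lagrangian solution `U`. Hence `A(t) (U'(0) - S_t'(0))ᵀ = U(t)`; now take determinants.
-/

open Matrix MeasureTheory

attribute [local instance] Matrix.normedAddCommGroup Matrix.normedSpace

/-- A Jacobi solution along `R`: a twice continuously differentiable matrix-valued
map `Y` satisfying `Y'' + R Y = 0`. -/
def IsJacobi {n : ℕ} (R Y : ℝ → Matrix (Fin n) (Fin n) ℝ) : Prop :=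
  ContDiff ℝ 2 Y ∧ ∀ t : ℝ, deriv (deriv Y) t + R t * Y t = 0

/-- A Lagrangian (self-conjugate) solution: the Wronskian `W(Y,Y)` vanishes. -/
def IsLagrangian {n : ℕ} (Y : ℝ → Matrix (Fin n) (Fin n) ℝ) : Prop :=
  ∀ t : ℝ, (deriv Y t)ᵀ * Y t = (Y t)ᵀ * deriv Y t

section MatrixCalculus

variable {𝕜 : Type*} [NontriviallyNormedField 𝕜] [CompleteSpace 𝕜]
  {l m p : Type*} [Fintype l] [Fintype m] [Fintype p] {t : 𝕜}

theorem HasDerivAt.matrix_mul {X : 𝕜 → Matrix l m 𝕜} {Y : 𝕜 → Matrix m p 𝕜}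
    {X' : Matrix l m 𝕜} {Y' : Matrix m p 𝕜} (hX : HasDerivAt X X' t) (hY : HasDerivAt Y Y' t) :
    HasDerivAt (fun s => X s * Y s) (X' * Y t + X t * Y') t := by
  rw [add_comm]
  exact (mulLinearMap 𝕜).toContinuousBilinearMap.hasDerivAt_of_bilinear (fun _ => hX) (fun _ => hY)

theorem HasDerivAt.matrix_transpose {X : 𝕜 → Matrix m p 𝕜} {X' : Matrix m p 𝕜}
    (hX : HasDerivAt X X' t) : HasDerivAt (fun s => (X s)ᵀ) X'ᵀ t :=
  (transposeLinearEquiv m p 𝕜 𝕜).toContinuousLinearEquiv.hasFDerivAt.comp_hasDerivAt t hX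

end MatrixCalculus

noncomputable def wronskian {m p q : Type*} [Fintype m]
    (X : ℝ → Matrix m p ℝ) (Y : ℝ → Matrix m q ℝ) (t : ℝ) : Matrix p q ℝ :=
  (deriv X t)ᵀ * Y t - (X t)ᵀ * deriv Y t

namespace IsJacobi

variable {n : ℕ} {R X Y : ℝ → Matrix (Fin n) (Fin n) ℝ}

theorem differentiable (hX : IsJacobi R X) : Differentiable ℝ X :=
  hX.1.differentiable two_ne_zero

theorem hasDerivAt_deriv (hX : IsJacobi R X) (t : ℝ) :
    HasDerivAt (deriv X) (-(R t * X t)) t := by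
  have hX2 : ContDiff ℝ (1 + 1) X := hX.1
  rw [← eq_neg_of_add_eq_zero_left (hX.2 t)]
  exact ((contDiff_succ_iff_deriv.mp hX2).2.2.differentiable one_ne_zero t).hasDerivAt

theorem hasDerivAt_wronskian (hRsym : ∀ t, (R t)ᵀ = R t) (hX : IsJacobi R X)
    (hY : IsJacobi R Y) (t : ℝ) : HasDerivAt (wronskian X Y) 0 t := by
  have h := ((hX.hasDerivAt_deriv t).matrix_transpose.matrix_mul
    (hY.differentiable t).hasDerivAt).sub
    ((hX.differentiable t).hasDerivAt.matrix_transpose.matrix_mul (hY.hasDerivAt_deriv t))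
  have hcancel : (-(R t * X t))ᵀ * Y t + (deriv X t)ᵀ * deriv Y t
      - ((deriv X t)ᵀ * deriv Y t + (X t)ᵀ * -(R t * Y t)) = 0 := by
    simp only [transpose_neg, transpose_mul, hRsym, neg_mul, mul_neg, Matrix.mul_assoc]
    abel
  exact h.congr_deriv hcancel

theorem wronskian_eq (hRsym : ∀ t, (R t)ᵀ = R t) (hX : IsJacobi R X) (hY : IsJacobi R Y)
    (s r : ℝ) : wronskian X Y s = wronskian X Y r :=
  is_const_of_deriv_eq_zero (fun t => (hasDerivAt_wronskian hRsym hX hY t).differentiableAt)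
    (fun t => (hasDerivAt_wronskian hRsym hX hY t).deriv) s r

end IsJacobi

theorem det_A_mul_det_deriv_diff_eq_det_U_general {n : ℕ}
    (R : ℝ → Matrix (Fin n) (Fin n) ℝ)
    (hRsym : ∀ t : ℝ, (R t)ᵀ = R t)
    (T : ℝ)
    (U : ℝ → Matrix (Fin n) (Fin n) ℝ)
    (hU : IsJacobi R U) (hUL : IsLagrangian U) (hU0 : U 0 = 1)
    (A : ℝ → Matrix (Fin n) (Fin n) ℝ)
    (hA : IsJacobi R A) (hA0 : A 0 = 0) (hA'0 : deriv A 0 = 1) :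
    ∀ t ∈ Set.Ioc (0 : ℝ) T, ∀ St : ℝ → Matrix (Fin n) (Fin n) ℝ,
      IsJacobi R St → St 0 = 1 → St t = 0 →
        (A t).det * (deriv U 0 - deriv St 0).det = (U t).det := by
  intro t _ St hSt hSt0 hStt
  have hU'0 : (deriv U 0)ᵀ = deriv U 0 := by simpa [hU0] using hUL 0
  have hSA : (deriv St t)ᵀ * A t = -1 := by
    simpa [wronskian, hStt, hSt0, hA0, hA'0] using hSt.wronskian_eq hRsym hA t 0
  have hSU : (deriv St t)ᵀ * U t = -(deriv U 0 - deriv St 0)ᵀ := by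
    simpa [wronskian, hStt, hSt0, hU0, hU'0] using hSt.wronskian_eq hRsym hU t 0
  have hAS : A t * (deriv St t)ᵀ = -1 := by
    have : -(deriv St t)ᵀ * A t = 1 := by rw [neg_mul, hSA, neg_neg]
    simpa using congrArg Neg.neg (mul_eq_one_comm.mp this)
  have hAU : A t * (deriv U 0 - deriv St 0)ᵀ = U t := by
    rw [← neg_neg (deriv U 0 - deriv St 0)ᵀ, ← hSU, mul_neg, ← Matrix.mul_assoc, hAS]
    simp
  simpa only [det_mul, det_transpose] using congrArg det hAU

/-- `det A(t) · det (U'(0) − S_t'(0)) = det U(t)` for `t ∈ (0, T]`, where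
`A(0) = 0`, `A'(0) = 1`, `U` is a nonsingular Lagrangian Jacobi solution with
`U(0) = 1`, and `S_t(0) = 1`, `S_t(t) = 0`. -/
theorem det_A_mul_det_deriv_diff_eq_det_U {n : ℕ} (hn : 1 ≤ n)
    (R : ℝ → Matrix (Fin n) (Fin n) ℝ) (hRc : Continuous R)
    (hRsym : ∀ t : ℝ, (R t)ᵀ = R t)
    (T : ℝ) (hT : 0 < T)
    (U : ℝ → Matrix (Fin n) (Fin n) ℝ)
    (hU : IsJacobi R U) (hUL : IsLagrangian U) (hU0 : U 0 = 1)
    (hUinv : ∀ u ∈ Set.Icc (0 : ℝ) T, IsUnit (U u))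
    (A : ℝ → Matrix (Fin n) (Fin n) ℝ)
    (hA : IsJacobi R A) (hA0 : A 0 = 0) (hA'0 : deriv A 0 = 1) :
    ∀ t ∈ Set.Ioc (0 : ℝ) T, ∀ St : ℝ → Matrix (Fin n) (Fin n) ℝ,
      IsJacobi R St → St 0 = 1 → St t = 0 →
        (A t).det * (deriv U 0 - deriv St 0).det = (U t).det :=
  det_A_mul_det_deriv_diff_eq_det_U_general R hRsym T U hU hUL hU0 A hA hA0 hA'0
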